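/- arXiv:2603.19202 — 3 statements merged into one kernel-verified Lean document; each statement's English description precedes it below -/
import Mathlib

section
/- For integers $0 \le s < r \le d/2$ with $r - s \ge 2$, setting $p = d - 2s$ and $q = r - s$ (so $p \ge 2q$, $q \ge 2$), one has $1/3 < (\binom{p}{q} - \binom{p}{q-1})/(\binom{p}{q-1} - \binom{p}{q-2}) < d + 1$. -/
/-!
Writing `B = C(p, q-1)`, the neighbouring coefficients are `C(p, q) = B (p-q+1)/q` and
`C(p, q-2) = B (q-1)/(p-q+2)`, so the quotient of consecutive differences is the rational function
`(p-2q+1)(p-q+2) / (q (p-2q+3))`. For `2 ≤ q` and `2q ≤ p` its first factor lies in `[1/3, 1)`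
and its second in `(1, p-q+2]`, which gives both bounds since `p = d - 2s ≤ d`.
-/

lemma Nat.cast_choose_succ_mul {R : Type*} [CommRing R] (p k : ℕ) :
    (p.choose (k + 1) : R) * (k + 1) = p.choose k * (p - k) := by
  rcases le_or_gt k p with hkp | hpk
  · rw [← Nat.cast_sub hkp]
    exact_mod_cast congrArg (Nat.cast : ℕ → R) (Nat.choose_succ_right_eq p k)
  · simp [Nat.choose_eq_zero_of_lt hpk, Nat.choose_eq_zero_of_lt (hpk.trans k.lt_succ_self)]

noncomputable def binomDiffRatio (p q : ℝ) : ℝ :=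
  (p - 2 * q + 1) * (p - q + 2) / (q * (p - 2 * q + 3))

lemma Nat.choose_sub_choose_div_choose_sub_choose {p q : ℕ} (hq : 2 ≤ q) (hpq : 2 * q ≤ p + 2) :
    ((p.choose q : ℝ) - p.choose (q - 1)) / ((p.choose (q - 1) : ℝ) - p.choose (q - 2)) =
      binomDiffRatio p q := by
  obtain ⟨k, rfl⟩ : ∃ k, q = k + 2 := ⟨q - 2, by omega⟩
  simp only [Nat.add_sub_cancel, show k + 2 - 1 = k + 1 by omega]
  have hB : (0 : ℝ) < p.choose (k + 1) := by exact_mod_cast Nat.choose_pos (by omega)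
  have hupper := Nat.cast_choose_succ_mul (R := ℝ) p (k + 1)
  have hlower := Nat.cast_choose_succ_mul (R := ℝ) p k
  have hp : (2 * k + 2 : ℝ) ≤ p := by exact_mod_cast (by omega : 2 * k + 2 ≤ p)
  push_cast at hupper hlower ⊢
  have hnum : (p.choose (k + 2) : ℝ) - p.choose (k + 1) =
      p.choose (k + 1) * (p - 2 * k - 3) / (k + 2) := by
    rw [eq_div_iff (by positivity)]
    linear_combination hupper
  have hden : (p.choose (k + 1) : ℝ) - p.choose k =
      p.choose (k + 1) * (p - 2 * k - 1) / (p - k) := by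
    rw [eq_div_iff (by linarith)]
    linear_combination hlower
  rw [hnum, hden, binomDiffRatio]
  field_simp
  ring

lemma one_third_lt_binomDiffRatio {p q : ℝ} (hq : 2 ≤ q) (hpq : 2 * q ≤ p) :
    1 / 3 < binomDiffRatio p q := by
  rw [binomDiffRatio, lt_div_iff₀ (by nlinarith)]
  nlinarith

lemma binomDiffRatio_lt {p q : ℝ} (hq : 2 ≤ q) (hpq : 2 * q ≤ p) : binomDiffRatio p q < p := by
  have hsecond : p - q + 2 ≤ p * q := by nlinarith
  rw [binomDiffRatio, div_lt_iff₀ (by nlinarith)]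
  nlinarith [mul_le_mul_of_nonneg_left hsecond (by linarith : 0 ≤ p - 2 * q + 3)]

theorem stmt_1_general (d r s : ℕ)
    (hsr : s + 2 ≤ r) (hr : r ≤ d / 2) :
    1 / 3 < (((d - 2*s).choose (r - s) : ℝ) - ((d - 2*s).choose (r - s - 1) : ℝ)) /
        (((d - 2*s).choose (r - s - 1) : ℝ) - ((d - 2*s).choose (r - s - 2) : ℝ)) ∧
    (((d - 2*s).choose (r - s) : ℝ) - ((d - 2*s).choose (r - s - 1) : ℝ)) /
        (((d - 2*s).choose (r - s - 1) : ℝ) - ((d - 2*s).choose (r - s - 2) : ℝ)) < (d : ℝ) + 1 := by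
  have hpd : ((d - 2 * s : ℕ) : ℝ) ≤ d := by exact_mod_cast Nat.sub_le d (2 * s)
  have hq : (2 : ℝ) ≤ ((r - s : ℕ) : ℝ) := by exact_mod_cast (by omega : 2 ≤ r - s)
  have hpq : 2 * ((r - s : ℕ) : ℝ) ≤ ((d - 2 * s : ℕ) : ℝ) := by
    exact_mod_cast (by omega : 2 * (r - s) ≤ d - 2 * s)
  rw [Nat.choose_sub_choose_div_choose_sub_choose (by omega) (by omega)]
  exact ⟨one_third_lt_binomDiffRatio hq hpq, by linarith [binomDiffRatio_lt hq hpq]⟩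

/-- For integers `0 ≤ s < r ≤ d/2` with `r - s ≥ 2`, setting `p = d - 2s`, `q = r - s`,
one has `1/3 < (C(p,q) - C(p,q-1))/(C(p,q-1) - C(p,q-2)) < d + 1`. -/
theorem stmt_1 (d r s : ℕ) (hd : 0 < d) (hde : Even d)
    (hsr : s + 2 ≤ r) (hr : r ≤ d / 2) :
    1 / 3 < (((d - 2*s).choose (r - s) : ℝ) - ((d - 2*s).choose (r - s - 1) : ℝ)) /
        (((d - 2*s).choose (r - s - 1) : ℝ) - ((d - 2*s).choose (r - s - 2) : ℝ)) ∧
    (((d - 2*s).choose (r - s) : ℝ) - ((d - 2*s).choose (r - s - 1) : ℝ)) /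
        (((d - 2*s).choose (r - s - 1) : ℝ) - ((d - 2*s).choose (r - s - 2) : ℝ)) < (d : ℝ) + 1 :=
  stmt_1_general d r s hsr hr
end

section
/- Fix a positive integer $k$. Then $a^{\langle k \rangle} \sim C_k \, a^{(k+1)/k}$ as $a \to \infty$, i.e. $\lim_{a \to \infty} a^{\langle k \rangle} / (C_k a^{(k+1)/k}) = 1$, where $C_k = (k!)^{1/k}/(k+1)$ and $a^{\langle k \rangle}$ is the $k$-th pseudopower of $a$. -/
/-
Let `n = n_k` be the top index of the `k`-th Macaulay representation of `a`. Then
`C(n,k) ≤ a < C(n+1,k)`, and the greedy recursion gives `C(n+1,k+1) ≤ a^⟨k⟩ ≤ C(n+2,k+1)`.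
As `a → ∞` also `n → ∞`, and `C(n+j,k) ~ n^k/k!` for each fixed shift `j`. So `a ~ n^k/k!`,
whence `C_k a^((k+1)/k) ~ C_k (n^k/k!)^((k+1)/k) = n^(k+1)/(k+1)!`, which is also the
asymptotic of `a^⟨k⟩`.
-/

/-- The `k`-th pseudopower `a^⟨k⟩`, computed greedily from the `k`-th Macaulay
representation of `a`: `n_k` is the largest `q` with `C(q,k) ≤ a`, the term
`C(n_k+1, k+1)` is recorded, and one recurses on `a - C(n_k, k)` with `k-1`. -/
def pseudoPow : ℕ → ℕ → ℕ
  | 0, _ => 0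
  | (k+1), a =>
    if a = 0 then 0 else
      let n := Nat.findGreatest (fun q => Nat.choose q (k+1) ≤ a) (a + k + 1)
      (n + 1).choose (k + 2) + pseudoPow k (a - n.choose (k+1))

open Filter Asymptotics

/-- The top index `n_k` of the `k`-th Macaulay representation of `a`, with the search bound
used in `pseudoPow`. -/
def macaulayTop (k a : ℕ) : ℕ := Nat.findGreatest (fun q => q.choose k ≤ a) (a + k)

section Macaulay

variable {k a : ℕ}

lemma lt_choose_add_self (hk : 0 < k) (a : ℕ) : a < (a + k).choose k := by
  obtain ⟨j, rfl⟩ : ∃ j, k = j + 1 := ⟨k - 1, by omega⟩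
  rw [← Nat.choose_symm_add]
  calc a < (a + 1).choose a := by rw [Nat.choose_succ_self_right]; exact a.lt_succ_self
    _ ≤ (a + (j + 1)).choose a := Nat.choose_le_choose a (by omega)

lemma choose_macaulayTop_le (hk : 0 < k) (a : ℕ) : (macaulayTop k a).choose k ≤ a :=
  Nat.findGreatest_spec (P := fun q => q.choose k ≤ a) (Nat.zero_le _)
    (by simp [Nat.choose_eq_zero_of_lt hk])

lemma lt_choose_macaulayTop_succ (hk : 0 < k) (a : ℕ) :
    a < (macaulayTop k a + 1).choose k := by
  have hne : macaulayTop k a ≠ a + k := fun h =>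
    (lt_choose_add_self hk a).not_ge (h ▸ choose_macaulayTop_le hk a)
  have hlt : macaulayTop k a < a + k := lt_of_le_of_ne (Nat.findGreatest_le _) hne
  exact not_le.mp <| Nat.findGreatest_is_greatest (P := fun q => q.choose k ≤ a)
    (Nat.lt_succ_self _) hlt

lemma tendsto_macaulayTop_atTop (k : ℕ) : Tendsto (macaulayTop k) atTop atTop := by
  refine tendsto_atTop_atTop.mpr fun b => ⟨max (b.choose k) b, fun a ha => ?_⟩
  exact Nat.le_findGreatest (by omega) (le_of_max_le_left ha)

lemma pseudoPow_succ (k : ℕ) (ha : a ≠ 0) :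
    pseudoPow (k + 1) a = (macaulayTop (k + 1) a + 1).choose (k + 2)
      + pseudoPow k (a - (macaulayTop (k + 1) a).choose (k + 1)) := by
  rw [pseudoPow, if_neg ha]
  rfl

lemma pseudoPow_le_choose_succ : ∀ {k a m : ℕ}, a < m.choose k →
    pseudoPow k a ≤ (m + 1).choose (k + 1)
  | 0, _, _, _ => by simp [pseudoPow]
  | k + 1, a, m, h => by
    rcases eq_or_ne a 0 with rfl | ha
    · simp [pseudoPow]
    set t := macaulayTop (k + 1) a
    have ht : t.choose (k + 1) ≤ a := choose_macaulayTop_le k.succ_pos a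
    have hat : a < (t + 1).choose (k + 1) := lt_choose_macaulayTop_succ k.succ_pos a
    have htm : t + 1 ≤ m := by
      by_contra! hmt
      exact (Nat.choose_le_choose (k + 1) (Nat.le_of_lt_succ hmt)).trans ht |>.not_gt h
    have hrem : a - t.choose (k + 1) < t.choose k := by
      rw [Nat.choose_succ_succ'] at hat
      omega
    calc pseudoPow (k + 1) a
        ≤ (t + 1).choose (k + 2) + (t + 1).choose (k + 1) := by
          rw [pseudoPow_succ k ha]
          exact Nat.add_le_add_left (pseudoPow_le_choose_succ hrem) _
      _ = (t + 2).choose (k + 2) := by rw [Nat.choose_succ_succ' (t + 1), add_comm]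
      _ ≤ (m + 1).choose (k + 2) := Nat.choose_le_choose _ (by omega)

lemma pseudoPow_le_choose_macaulayTop (hk : 0 < k) (a : ℕ) :
    pseudoPow k a ≤ (macaulayTop k a + 2).choose (k + 1) :=
  pseudoPow_le_choose_succ (lt_choose_macaulayTop_succ hk a)

lemma choose_macaulayTop_le_pseudoPow (hk : 0 < k) (ha : a ≠ 0) :
    (macaulayTop k a + 1).choose (k + 1) ≤ pseudoPow k a := by
  obtain ⟨j, rfl⟩ : ∃ j, k = j + 1 := ⟨k - 1, by omega⟩
  rw [pseudoPow_succ j ha]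
  exact Nat.le_add_right _ _

end Macaulay

theorem Asymptotics.IsEquivalent.of_le_of_le {α : Type*} {l : Filter α} {u v w g : α → ℝ}
    (hu : u ~[l] g) (hw : w ~[l] g) (huv : u ≤ᶠ[l] v) (hvw : v ≤ᶠ[l] w) : v ~[l] g := by
  refine IsBigO.trans_isLittleO ?_ (hu.isLittleO.norm_left.add hw.isLittleO.norm_left)
  refine IsBigO.of_bound' ?_
  filter_upwards [huv, hvw] with x h₁ h₂
  simp only [Pi.sub_apply, Real.norm_eq_abs]
  have hu' := neg_abs_le (u x - g x)
  have hw' := le_abs_self (w x - g x)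
  have hu₀ := abs_nonneg (u x - g x)
  have hw₀ := abs_nonneg (w x - g x)
  rw [abs_of_nonneg (add_nonneg hu₀ hw₀)]
  exact abs_le.mpr ⟨by linarith, by linarith⟩

lemma isEquivalent_choose_add (j k : ℕ) :
    (fun n : ℕ => ((n + j).choose k : ℝ)) ~[atTop] fun n => (n : ℝ) ^ k / k.factorial := by
  have hshift : (fun n : ℕ => (n : ℝ) + j) ~[atTop] fun n => (n : ℝ) :=
    IsEquivalent.refl.add_const_of_norm_tendsto_atTop
      (tendsto_norm_atTop_atTop.comp tendsto_natCast_atTop_atTop)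
  have hpow : (fun n : ℕ => ((n : ℝ) + j) ^ k / k.factorial) ~[atTop]
      fun n => (n : ℝ) ^ k / k.factorial :=
    (hshift.pow k).div IsEquivalent.refl
  refine ((isEquivalent_choose k).comp_tendsto (tendsto_add_atTop_nat j)).trans ?_
  simpa [Function.comp_def] using hpow

lemma factorial_rpow_div_mul_rpow {k : ℕ} (hk : k ≠ 0) {x : ℝ} (hx : 0 ≤ x) :
    (k.factorial : ℝ) ^ ((1 : ℝ) / k) / (k + 1) * (x ^ k / k.factorial) ^ (((k : ℝ) + 1) / k)
      = x ^ (k + 1) / (k + 1).factorial := by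
  have hk' : (k : ℝ) ≠ 0 := Nat.cast_ne_zero.mpr hk
  have hf : (0 : ℝ) < k.factorial := by exact_mod_cast k.factorial_pos
  have hpow : (x ^ k) ^ (((k : ℝ) + 1) / k) = x ^ (k + 1) := by
    rw [← Real.rpow_natCast x k, ← Real.rpow_mul hx, ← Real.rpow_natCast x (k + 1)]
    congr 1
    push_cast
    field_simp
  have hfac : (k.factorial : ℝ) ^ (((k : ℝ) + 1) / k)
      = k.factorial * k.factorial ^ ((1 : ℝ) / k) := by
    rw [show ((k : ℝ) + 1) / k = 1 + 1 / k by field_simp, Real.rpow_add hf, Real.rpow_one]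
  rw [Real.div_rpow (by positivity) hf.le, hpow, hfac, Nat.factorial_succ]
  have hroot : (0 : ℝ) < k.factorial ^ ((1 : ℝ) / k) := by positivity
  push_cast
  field_simp

/-- For fixed `k ≥ 1`, `a^⟨k⟩ ~ C_k a^((k+1)/k)` as `a → ∞`, where
`C_k = (k!)^(1/k)/(k+1)`. -/
theorem stmt_6 (k : ℕ) (hk : 1 ≤ k) :
    Filter.Tendsto
      (fun a : ℕ => (pseudoPow k a : ℝ) /
        (((k.factorial : ℝ) ^ ((1 : ℝ) / (k : ℝ)) / ((k : ℝ) + 1)) *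
          (a : ℝ) ^ (((k : ℝ) + 1) / (k : ℝ))))
      Filter.atTop (nhds 1) := by
  set t := macaulayTop k
  have ht := tendsto_macaulayTop_atTop k
  have ha_equiv : (fun a : ℕ => (a : ℝ)) ~[atTop] fun a => (t a : ℝ) ^ k / k.factorial := by
    refine ((isEquivalent_choose_add 0 k).comp_tendsto ht).of_le_of_le
      ((isEquivalent_choose_add 1 k).comp_tendsto ht) (Eventually.of_forall fun a => ?_)
      (Eventually.of_forall fun a => ?_)
    · exact Nat.cast_le.mpr (choose_macaulayTop_le hk a)
    · exact Nat.cast_le.mpr (lt_choose_macaulayTop_succ hk a).le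
  have hden : (fun a : ℕ =>
      (k.factorial : ℝ) ^ ((1 : ℝ) / k) / (k + 1) * (a : ℝ) ^ (((k : ℝ) + 1) / k)) ~[atTop]
      fun a => (t a : ℝ) ^ (k + 1) / (k + 1).factorial :=
    (IsEquivalent.refl.mul (ha_equiv.rpow fun a => by positivity)).congr_right
      (Eventually.of_forall fun a => factorial_rpow_div_mul_rpow (by omega) (Nat.cast_nonneg _))
  have hnum : (fun a : ℕ => (pseudoPow k a : ℝ)) ~[atTop]
      fun a => (t a : ℝ) ^ (k + 1) / (k + 1).factorial := by
    refine ((isEquivalent_choose_add 1 (k + 1)).comp_tendsto ht).of_le_of_le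
      ((isEquivalent_choose_add 2 (k + 1)).comp_tendsto ht) ?_ (Eventually.of_forall fun a => ?_)
    · filter_upwards [eventually_ne_atTop 0] with a ha
      exact Nat.cast_le.mpr (choose_macaulayTop_le_pseudoPow hk ha)
    · exact Nat.cast_le.mpr (pseudoPow_le_choose_macaulayTop hk a)
  refine (isEquivalent_iff_tendsto_one ?_).mp (hnum.trans hden.symm)
  filter_upwards [eventually_ne_atTop 0] with a ha
  positivity
end

section
/- Let $h(t) = \sum_{k=0}^d h_k t^k$ be a reciprocal polynomial of even degree $d$ (so $h_k = h_{d-k}$), and let $\gamma(t)$ be its gamma polynomial, i.e. the unique polynomial with $h(t) = \sum_{i=0}^{d/2} \gamma_i t^i (1+t)^{d-2i}$. Then $\gamma(u) = u^{d/2} g(1/u - 2)$ where $g(u) = h_{d/2} + 2\sum_{j=1}^{d/2} h_{d/2 - j} T_j(u/2)$ and $T_j$ is the $j$-th Chebyshev polynomial of the first kind. -/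
/-!
Substitute `t ≠ 0` and divide by `t^m`, `m = d/2`. Since `(1+t)^2 / t = t + t⁻¹ + 2`, the gamma
expansion becomes `∑ γ_i (s+2)^(m-i)` with `s = t + t⁻¹`, while palindromicity pairs `h_{m-j} t^{m-j}`
with `h_{m+j} t^{m+j}`, giving `h_m + ∑ h_{m-j} (t^j + t^{-j}) = h_m + ∑ h_{m-j} C_j(s)`, where
`C_j(s) = 2 T_j(s/2)` is the Vieta–Lucas polynomial. The two polynomials in `s` agree on the infinite
set `{t + t⁻¹ | t ≥ 1}`, hence are equal, and evaluating at `s = 1/u - 2` gives the claim.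
-/

open Finset Polynomial

theorem Polynomial.Chebyshev.C_eval_add_inv {K : Type*} [Field K] {t : K} (ht : t ≠ 0) (n : ℕ) :
    (Chebyshev.C K n).eval (t + t⁻¹) = t ^ n + t⁻¹ ^ n := by
  rw [← dickson_one_one_eq_chebyshev_C, dickson_one_one_eval_add_inv _ _ (mul_inv_cancel₀ ht)]

theorem Polynomial.Chebyshev.C_eval_two_mul {R : Type*} [CommRing R] (x : R) (n : ℤ) :
    (Chebyshev.C R n).eval (2 * x) = 2 * (Chebyshev.T R n).eval x := by
  simpa using congrArg (eval x) (C_comp_two_mul_X R n)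

section Reciprocal

variable {K : Type*} [Field K] {t : K}

theorem pow_eq_pow_mul_inv_pow (ht : t ≠ 0) {i m : ℕ} (him : i ≤ m) :
    t ^ i = t ^ m * t⁻¹ ^ (m - i) := by
  rw [inv_pow, ← pow_sub₀ t ht (Nat.sub_le m i), Nat.sub_sub_self him]

theorem sum_mul_pow_of_palindromic (h : ℕ → K) (m : ℕ) (hrec : ∀ k ≤ 2 * m, h k = h (2 * m - k))
    (ht : t ≠ 0) :
    ∑ k ∈ range (2 * m + 1), h k * t ^ k
      = t ^ m * (h m + ∑ j ∈ Icc 1 m, h (m - j) * (t ^ j + t⁻¹ ^ j)) := by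
  have hsplit : ∑ k ∈ range (2 * m + 1), h k * t ^ k
      = ∑ k ∈ range m, h (m - 1 - k) * t ^ (m - 1 - k) + h m * t ^ m
        + ∑ k ∈ range m, h (m + 1 + k) * t ^ (m + 1 + k) := by
    rw [show 2 * m + 1 = m + 1 + m by ring, sum_range_add, sum_range_succ,
      sum_range_reflect (fun k => h k * t ^ k)]
  have hterm : ∀ k ∈ range m, t ^ m * (h (m - (1 + k)) * (t ^ (1 + k) + t⁻¹ ^ (1 + k)))
      = h (m - 1 - k) * t ^ (m - 1 - k) + h (m + 1 + k) * t ^ (m + 1 + k) := by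
    intro k hk
    obtain ⟨i, rfl⟩ := Nat.exists_eq_add_of_lt (mem_range.mp hk)
    have hsym : h (k + i + 1 + 1 + k) = h i := by rw [hrec _ (by omega)]; congr 1; omega
    rw [hsym, show k + i + 1 - (1 + k) = i by omega, show k + i + 1 - 1 - k = i by omega, inv_pow]
    field_simp
    ring
  rw [hsplit, ← Ico_add_one_right_eq_Icc, sum_Ico_eq_sum_range, Nat.add_sub_cancel, mul_add,
    mul_sum, sum_congr rfl hterm, sum_add_distrib]
  ring

theorem sum_mul_pow_mul_one_add_pow (γ : ℕ → K) (m : ℕ) (ht : t ≠ 0) :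
    ∑ i ∈ range (m + 1), γ i * t ^ i * (1 + t) ^ (2 * m - 2 * i)
      = t ^ m * ∑ i ∈ range (m + 1), γ i * (t + t⁻¹ + 2) ^ (m - i) := by
  rw [mul_sum]
  refine sum_congr rfl fun i hi => ?_
  have hsq : t + t⁻¹ + 2 = t⁻¹ * (1 + t) ^ 2 := by field_simp; ring
  rw [pow_eq_pow_mul_inv_pow ht (Nat.lt_succ_iff.mp (mem_range.mp hi)), hsq, mul_pow, ← pow_mul,
    show 2 * m - 2 * i = 2 * (m - i) by omega]
  ring

end Reciprocal

theorem injOn_add_inv_Ici_one : Set.InjOn (fun t : ℝ => t + t⁻¹) (Set.Ici 1) := by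
  intro a (ha : 1 ≤ a) b (hb : 1 ≤ b) (hab : a + a⁻¹ = b + b⁻¹)
  have hfactor : (a - b) * (a * b - 1) = 0 := by
    field_simp at hab
    linear_combination hab
  rcases mul_eq_zero.mp hfactor with h | h
  · linarith
  · nlinarith

theorem Polynomial.eq_of_eval_add_inv_eq {p q : ℝ[X]}
    (h : ∀ t : ℝ, 1 ≤ t → p.eval (t + t⁻¹) = q.eval (t + t⁻¹)) : p = q :=
  eq_of_infinite_eval_eq p q <| ((Set.Ici_infinite 1).image injOn_add_inv_Ici_one).mono <| by
    rintro _ ⟨t, ht, rfl⟩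
    exact h t ht

section Transforms

variable {R : Type*} [CommRing R]

/-- `u^m γ(1/u)` written in the variable `s = 1/u - 2`. -/
noncomputable def gammaReverseShift (γ : ℕ → R) (m : ℕ) : R[X] :=
  ∑ i ∈ range (m + 1), C (γ i) * (X + 2) ^ (m - i)

/-- The paper's `g`, using `2 T_j(s/2) = C_j(s)`. -/
noncomputable def chebyshevSum (h : ℕ → R) (m : ℕ) : R[X] :=
  C (h m) + ∑ j ∈ Icc 1 m, C (h (m - j)) * Chebyshev.C R j

theorem eval_gammaReverseShift (γ : ℕ → R) (m : ℕ) (x : R) :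
    (gammaReverseShift γ m).eval x = ∑ i ∈ range (m + 1), γ i * (x + 2) ^ (m - i) := by
  simp [gammaReverseShift, eval_finsetSum]

theorem eval_chebyshevSum (h : ℕ → R) (m : ℕ) (x : R) :
    (chebyshevSum h m).eval x = h m + ∑ j ∈ Icc 1 m, h (m - j) * (Chebyshev.C R j).eval x := by
  simp [chebyshevSum, eval_finsetSum]

theorem eval_chebyshevSum_two_mul (h : ℕ → R) (m : ℕ) (x : R) :
    (chebyshevSum h m).eval (2 * x)
      = h m + 2 * ∑ j ∈ Icc 1 m, h (m - j) * (Chebyshev.T R j).eval x := by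
  simp only [eval_chebyshevSum, Chebyshev.C_eval_two_mul, mul_sum, mul_left_comm (2 : R)]

end Transforms

theorem stmt_19_general (d : ℕ) (hde : Even d) (h γ : ℕ → ℝ)
    (hrec : ∀ k ≤ d, h k = h (d - k))
    (hγ : ∀ t : ℝ, ∑ k ∈ Finset.range (d + 1), h k * t ^ k
      = ∑ i ∈ Finset.range (d / 2 + 1), γ i * t ^ i * (1 + t) ^ (d - 2 * i)) :
    ∀ u : ℝ, u ≠ 0 →
      ∑ i ∈ Finset.range (d / 2 + 1), γ i * u ^ i
        = u ^ (d / 2) *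
          (h (d / 2) + 2 * ∑ j ∈ Finset.Icc 1 (d / 2),
            h (d / 2 - j) * (Polynomial.Chebyshev.T ℝ (j : ℤ)).eval ((1 / u - 2) / 2)) := by
  obtain ⟨m, rfl⟩ := even_iff_two_dvd.mp hde
  rw [Nat.mul_div_cancel_left m two_pos] at hγ ⊢
  have hpoly : gammaReverseShift γ m = chebyshevSum h m := by
    refine eq_of_eval_add_inv_eq fun t ht => ?_
    have ht0 : t ≠ 0 := by positivity
    refine mul_left_cancel₀ (pow_ne_zero m ht0) ?_
    simp only [eval_gammaReverseShift, eval_chebyshevSum, Chebyshev.C_eval_add_inv ht0]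
    rw [← sum_mul_pow_mul_one_add_pow γ m ht0, ← hγ, sum_mul_pow_of_palindromic h m hrec ht0]
  intro u hu
  calc ∑ i ∈ range (m + 1), γ i * u ^ i
      = u ^ m * (gammaReverseShift γ m).eval (1 / u - 2) := by
        rw [eval_gammaReverseShift, sub_add_cancel, one_div, mul_sum]
        refine sum_congr rfl fun i hi => ?_
        rw [pow_eq_pow_mul_inv_pow hu (Nat.lt_succ_iff.mp (mem_range.mp hi))]
        ring
    _ = u ^ m * (chebyshevSum h m).eval (2 * ((1 / u - 2) / 2)) := by
        rw [hpoly, mul_div_cancel₀ _ two_ne_zero]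
    _ = _ := by rw [eval_chebyshevSum_two_mul]

/-- Let `h(t) = ∑_{k=0}^d h_k t^k` be a reciprocal polynomial of even degree `d`
(`h_k = h_{d-k}`), and let `γ` be its gamma polynomial, i.e.
`h(t) = ∑_{i=0}^{d/2} γ_i t^i (1+t)^{d-2i}`.  Then for `u ≠ 0`,
`γ(u) = u^{d/2} g(1/u - 2)` where
`g(v) = h_{d/2} + 2 ∑_{j=1}^{d/2} h_{d/2-j} T_j(v/2)` and `T_j` is the `j`-th
Chebyshev polynomial of the first kind. -/
theorem stmt_19 (d : ℕ) (hd : 0 < d) (hde : Even d) (h γ : ℕ → ℝ)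
    (hrec : ∀ k ≤ d, h k = h (d - k))
    (hγ : ∀ t : ℝ, ∑ k ∈ Finset.range (d + 1), h k * t ^ k
      = ∑ i ∈ Finset.range (d / 2 + 1), γ i * t ^ i * (1 + t) ^ (d - 2 * i)) :
    ∀ u : ℝ, u ≠ 0 →
      ∑ i ∈ Finset.range (d / 2 + 1), γ i * u ^ i
        = u ^ (d / 2) *
          (h (d / 2) + 2 * ∑ j ∈ Finset.Icc 1 (d / 2),
            h (d / 2 - j) * (Polynomial.Chebyshev.T ℝ (j : ℤ)).eval ((1 / u - 2) / 2)) :=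
  stmt_19_general d hde h γ hrec hγ
end
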